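/- Let M be an additive category (or more generally a category with zero object and biproducts). A functor F: Sub(A) → M is additive (meaning F(i,i) = 0 for all i and F(i,k) → F(i,j) ⊕ F(j,k) is an isomorphism for all i ≤ j ≤ k) if and only if for every object (i,j), the canonical map F(i,j) → ⨁_{i ≤ l < j} F(l, l+1) is an isomorphism, where A = {0 < 1 < ⋯ < n}. -/

import Mathlib

open CategoryTheory CategoryTheory.Limits

/-- The objects of `Sub(A)` for `A = {0 < 1 < ⋯ < N}`: pairs `(i,j)` with `i ≤ j`. -/
structure SubCat (N : ℕ) where
  pair : Fin (N + 1) × Fin (N + 1)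
  isLE : pair.1 ≤ pair.2

/-- The preorder on `Sub(A)`: a (unique) morphism `(i',j') ⟶ (i,j)` exactly when
`i' ≤ i ≤ j ≤ j'`; this makes `Sub(A)` a (poset) category. -/
instance (N : ℕ) : Preorder (SubCat N) where
  le x y := x.pair.1 ≤ y.pair.1 ∧ y.pair.2 ≤ x.pair.2
  le_refl x := ⟨le_refl _, le_refl _⟩
  le_trans x y z h1 h2 := ⟨h1.1.trans h2.1, h2.2.trans h1.2⟩

/-- A functor `F : Sub(A) ⥤ M` is additive if `F(i,i) = 0` for all `i` and the canonical
map `F(i,k) ⟶ F(i,j) ⊕ F(j,k)` is an isomorphism for all `i ≤ j ≤ k`. -/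
def IsAdditiveOn {M : Type*} [Category M] [Preadditive M] [HasZeroObject M]
    [HasFiniteBiproducts M] [HasBinaryBiproducts M] {N : ℕ} (F : SubCat N ⥤ M) : Prop :=
  (∀ i : Fin (N + 1), IsZero (F.obj ⟨(i, i), le_refl i⟩)) ∧
  (∀ (i j k : Fin (N + 1)) (hij : i ≤ j) (hjk : j ≤ k),
    IsIso (biprod.lift
      (F.map (homOfLE (show (⟨(i, k), hij.trans hjk⟩ : SubCat N) ≤ ⟨(i, j), hij⟩ from
        ⟨le_refl i, hjk⟩)))
      (F.map (homOfLE (show (⟨(i, k), hij.trans hjk⟩ : SubCat N) ≤ ⟨(j, k), hjk⟩ from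
        ⟨hij, le_refl k⟩)))))

/-- The canonical map `F(i,j) ⟶ ⨁_{i ≤ l < j} F(l, l+1)`. -/
noncomputable def canMap {M : Type*} [Category M] [Preadditive M] [HasZeroObject M]
    [HasFiniteBiproducts M] {N : ℕ} (F : SubCat N ⥤ M) (i j : Fin (N + 1)) (h : i ≤ j) :
    F.obj ⟨(i, j), h⟩ ⟶
      ⨁ (fun l : {l : Fin N // i ≤ l.castSucc ∧ l.succ ≤ j} =>
        F.obj ⟨(l.1.castSucc, l.1.succ), (Fin.castSucc_lt_succ : l.1.castSucc < l.1.succ).le⟩) :=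
  biproduct.lift fun l => F.map (homOfLE ⟨l.2.1, l.2.2⟩)

section Aux

variable {M : Type*} [Category M] [Preadditive M] [HasZeroObject M]
    [HasFiniteBiproducts M] [HasBinaryBiproducts M] {N : ℕ} (F : SubCat N ⥤ M)

/-- The index set for the biproduct. -/
abbrev SubIdx (N : ℕ) (i j : Fin (N + 1)) : Type :=
  {l : Fin N // i ≤ l.castSucc ∧ l.succ ≤ j}

/-- The family of objects for the biproduct. -/
abbrev subFam (i j : Fin (N + 1)) : SubIdx N i j → M :=
  fun l => F.obj ⟨(l.1.castSucc, l.1.succ), (Fin.castSucc_lt_succ : l.1.castSucc < l.1.succ).le⟩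

variable {i j k : Fin (N + 1)}

/-- Left inclusion of index sets. -/
abbrev incL (hjk : j ≤ k) : SubIdx N i j → SubIdx N i k :=
  fun l => ⟨l.1, l.2.1, l.2.2.trans hjk⟩

/-- Right inclusion of index sets. -/
abbrev incR (hij : i ≤ j) : SubIdx N j k → SubIdx N i k :=
  fun l => ⟨l.1, hij.trans l.2.1, l.2.2⟩

lemma incL_injective (hjk : j ≤ k) : Function.Injective (incL (N := N) (i := i) hjk) := by
  intro a b hab
  exact Subtype.ext (show (incL hjk a).1 = (incL hjk b).1 from congrArg Subtype.val hab)

lemma incR_injective (hij : i ≤ j) : Function.Injective (incR (N := N) (k := k) hij) := by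
  intro a b hab
  exact Subtype.ext (show (incR hij a).1 = (incR hij b).1 from congrArg Subtype.val hab)

lemma incL_ne_incR (hij : i ≤ j) (hjk : j ≤ k) (a : SubIdx N i j) (b : SubIdx N j k) :
    incL hjk a ≠ incR hij b := by
  intro h
  have hv : a.1 = b.1 := congrArg Subtype.val h
  have h1 : (a.1.succ : Fin (N + 1)) ≤ j := a.2.2
  have h2 : j ≤ b.1.castSucc := b.2.1
  rw [hv] at h1
  simp only [Fin.le_def, Fin.val_succ, Fin.coe_castSucc] at h1 h2
  omega

/-- The index set for `(i,k)` is the disjoint union of those for `(i,j)` and `(j,k)`. -/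
def subIdxEquiv (hij : i ≤ j) (hjk : j ≤ k) :
    SubIdx N i j ⊕ SubIdx N j k ≃ SubIdx N i k where
  toFun := Sum.elim (incL hjk) (incR hij)
  invFun l :=
    if h : l.1.succ ≤ j then Sum.inl ⟨l.1, l.2.1, h⟩
    else Sum.inr ⟨l.1, by
      simp only [not_le, Fin.lt_def, Fin.le_def, Fin.val_succ, Fin.coe_castSucc] at h ⊢
      omega, l.2.2⟩
  left_inv x := by
    rcases x with a | b
    · simp only [Sum.elim_inl]
      exact dif_pos a.2.2
    · simp only [Sum.elim_inr]
      exact dif_neg (by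
        intro h
        have h2 : j ≤ b.1.castSucc := b.2.1
        have h1 : (b.1.succ : Fin (N + 1)) ≤ j := h
        simp only [Fin.le_def, Fin.val_succ, Fin.coe_castSucc] at h1 h2
        omega)
  right_inv l := by
    dsimp only
    split <;> rfl

/-- The comparison map `⨁_{i ≤ l < k} ⟶ (⨁_{i ≤ l < j}) ⊞ (⨁_{j ≤ l < k})`. -/
noncomputable def cmpMap (hij : i ≤ j) (hjk : j ≤ k) :
    (⨁ subFam F i k) ⟶ (⨁ subFam F i j) ⊞ (⨁ subFam F j k) :=
  biprod.lift
    (biproduct.lift fun l => biproduct.π (subFam F i k) (incL hjk l))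
    (biproduct.lift fun l => biproduct.π (subFam F i k) (incR hij l))

/-- The inverse comparison map. -/
noncomputable def cmpInv (hij : i ≤ j) (hjk : j ≤ k) :
    ((⨁ subFam F i j) ⊞ (⨁ subFam F j k)) ⟶ (⨁ subFam F i k) :=
  biprod.desc
    (biproduct.desc fun l => biproduct.ι (subFam F i k) (incL hjk l))
    (biproduct.desc fun l => biproduct.ι (subFam F i k) (incR hij l))

lemma cmpMap_cmpInv (hij : i ≤ j) (hjk : j ≤ k) :
    cmpMap F hij hjk ≫ cmpInv F hij hjk = 𝟙 _ := by
  rw [cmpMap, cmpInv, biprod.lift_desc, biproduct.lift_desc, biproduct.lift_desc,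
    ← biproduct.total (f := subFam F i k)]
  rw [← Equiv.sum_comp (subIdxEquiv hij hjk)
    (fun l => biproduct.π (subFam F i k) l ≫ biproduct.ι (subFam F i k) l),
    Fintype.sum_sum_type]
  rfl

lemma cmpInv_cmpMap (hij : i ≤ j) (hjk : j ≤ k) :
    cmpInv F hij hjk ≫ cmpMap F hij hjk = 𝟙 _ := by
  apply biprod.hom_ext' <;> apply biproduct.hom_ext' <;> intro a <;>
    apply biprod.hom_ext <;> apply biproduct.hom_ext <;> intro b <;>
    simp only [cmpMap, cmpInv, Category.assoc, biprod.lift_fst, biprod.lift_snd,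
      biprod.inl_desc_assoc, biprod.inr_desc_assoc, biproduct.ι_desc_assoc,
      biproduct.lift_π, biprod.inl_fst, biprod.inr_snd, biprod.inl_snd, biprod.inr_fst,
      Category.comp_id, comp_zero, Category.id_comp]
  · by_cases h : a = b
    · subst h
      rw [biproduct.ι_π_self, biproduct.ι_π_self]
    · rw [biproduct.ι_π_ne _ h, biproduct.ι_π_ne _ (fun hh => h (incL_injective hjk hh))]
  · rw [biproduct.ι_π_ne _ (incL_ne_incR hij hjk a b), zero_comp]
  · rw [biproduct.ι_π_ne _ (fun hh => (incL_ne_incR hij hjk b a) hh.symm), zero_comp]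
  · by_cases h : a = b
    · subst h
      rw [biproduct.ι_π_self, biproduct.ι_π_self]
    · rw [biproduct.ι_π_ne _ h, biproduct.ι_π_ne _ (fun hh => h (incR_injective hij hh))]

instance cmpMap_isIso (hij : i ≤ j) (hjk : j ≤ k) : IsIso (cmpMap F hij hjk) :=
  ⟨cmpInv F hij hjk, cmpMap_cmpInv F hij hjk, cmpInv_cmpMap F hij hjk⟩

lemma square (hij : i ≤ j) (hjk : j ≤ k) :
    canMap F i k (hij.trans hjk) ≫ cmpMap F hij hjk =
      (biprod.lift
        (F.map (homOfLE (show (⟨(i, k), hij.trans hjk⟩ : SubCat N) ≤ ⟨(i, j), hij⟩ from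
          ⟨le_refl i, hjk⟩)))
        (F.map (homOfLE (show (⟨(i, k), hij.trans hjk⟩ : SubCat N) ≤ ⟨(j, k), hjk⟩ from
          ⟨hij, le_refl k⟩)))) ≫
      biprod.map (canMap F i j hij) (canMap F j k hjk) := by
  apply biprod.hom_ext <;> apply biproduct.hom_ext <;> intro b <;>
    simp only [canMap, cmpMap, Category.assoc, biprod.lift_fst, biprod.lift_snd,
      biprod.lift_fst_assoc, biprod.lift_snd_assoc, biprod.map_fst, biprod.map_snd,
      biproduct.lift_π] <;>
    rw [← F.map_comp] <;> exact congrArg F.map (Subsingleton.elim _ _)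


lemma subCat_ext {N : ℕ} {x y : SubCat N} (h : x.pair = y.pair) : x = y := by
  cases x; cases y; cases h; rfl

lemma subIdx_isEmpty (N : ℕ) (i : Fin (N + 1)) : IsEmpty (SubIdx N i i) :=
  ⟨fun l => by
    have h1 := l.2.1
    have h2 := l.2.2
    simp only [Fin.le_def, Fin.val_succ, Fin.coe_castSucc] at h1 h2
    omega⟩

lemma isZero_biproduct_empty (hE : IsEmpty (SubIdx N i j)) : IsZero (⨁ subFam F i j) := by
  rw [IsZero.iff_id_eq_zero]
  apply biproduct.hom_ext
  intro b
  exact hE.elim b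

/-- `canMap` is an isomorphism on length-one intervals. -/
lemma canMap_isIso_succ (i j : Fin (N + 1)) (h : i ≤ j) (hs : (j : ℕ) = (i : ℕ) + 1) :
    IsIso (canMap F i j h) := by
  have hiN : (i : ℕ) < N := by have := j.isLt; omega
  set d : SubIdx N i j := ⟨⟨(i : ℕ), hiN⟩, by
    constructor <;> simp only [Fin.le_def, Fin.val_succ, Fin.coe_castSucc] <;> omega⟩ with hd
  have huniq : ∀ l : SubIdx N i j, l = d := by
    intro l
    apply Subtype.ext
    apply Fin.ext
    have h1 := l.2.1
    have h2 := l.2.2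
    simp only [Fin.le_def, Fin.val_succ, Fin.coe_castSucc] at h1 h2
    simp only [hd]
    omega
  haveI hπ : IsIso (biproduct.π (subFam F i j) d) := by
    refine ⟨biproduct.ι _ d, ?_, biproduct.ι_π_self _ _⟩
    apply biproduct.hom_ext'
    intro b
    rw [huniq b]
    rw [biproduct.ι_π_self_assoc, Category.comp_id]
  have e1 : d.1.castSucc = i := by apply Fin.ext; simp [hd]
  have e2 : d.1.succ = j := by apply Fin.ext; simp [hd, hs]
  have heq : (⟨(d.1.castSucc, d.1.succ), (Fin.castSucc_lt_succ : d.1.castSucc < d.1.succ).le⟩ : SubCat N)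
      = ⟨(i, j), h⟩ := by
    apply subCat_ext
    rw [Prod.mk.injEq]
    exact ⟨e1, e2⟩
  have hmap : homOfLE (show (⟨(i, j), h⟩ : SubCat N) ≤
      ⟨(d.1.castSucc, d.1.succ), (Fin.castSucc_lt_succ : d.1.castSucc < d.1.succ).le⟩ from ⟨d.2.1, d.2.2⟩)
      = eqToHom heq.symm := Subsingleton.elim _ _
  haveI hc : IsIso (canMap F i j h ≫ biproduct.π (subFam F i j) d) := by
    rw [canMap, biproduct.lift_π, hmap]
    infer_instance
  have : canMap F i j h = (canMap F i j h ≫ biproduct.π (subFam F i j) d) ≫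
      inv (biproduct.π (subFam F i j) d) := by
    rw [Category.assoc, IsIso.hom_inv_id, Category.comp_id]
  rw [this]
  infer_instance

lemma canMap_isIso_of_additive (hF : IsAdditiveOn F) :
    ∀ (d : ℕ) (i j : Fin (N + 1)) (h : i ≤ j), (j : ℕ) - (i : ℕ) = d →
      IsIso (canMap F i j h) := by
  intro d
  induction d with
  | zero =>
    intro i j h hd
    obtain rfl : i = j := by
      apply Fin.ext
      simp only [Fin.le_def] at h
      omega
    have hsrc : IsZero (F.obj ⟨(i, i), h⟩) := hF.1 i
    have htgt : IsZero (⨁ subFam F i i) := isZero_biproduct_empty F (subIdx_isEmpty N i)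
    rw [hsrc.eq_of_src (canMap F i i h) ((hsrc.iso htgt).hom)]
    infer_instance
  | succ d ih =>
    intro i j h hd
    have hjN := j.isLt
    set m : Fin (N + 1) := ⟨(i : ℕ) + 1, by omega⟩ with hm
    have him : i ≤ m := by simp [Fin.le_def, hm]
    have hmj : m ≤ j := by simp only [Fin.le_def, hm]; omega
    haveI hL : IsIso (canMap F i m him) := canMap_isIso_succ F i m him rfl
    haveI hR : IsIso (canMap F m j hmj) := ih m j hmj (by simp [hm]; omega)
    haveI hB := hF.2 i m j him hmj
    haveI hbm : IsIso (biprod.map (canMap F i m him) (canMap F m j hmj)) := by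
      rw [show biprod.map (canMap F i m him) (canMap F m j hmj) =
        (biprod.mapIso (asIso (canMap F i m him)) (asIso (canMap F m j hmj))).hom from rfl]
      infer_instance
    have h0 : canMap F i j h = canMap F i j (him.trans hmj) := rfl
    have heq : canMap F i j h = (canMap F i j (him.trans hmj) ≫ cmpMap F him hmj) ≫
        inv (cmpMap F him hmj) := by
      rw [Category.assoc, IsIso.hom_inv_id, Category.comp_id, h0]
    rw [heq, square F him hmj]
    infer_instance
end Aux

/-- A functor `F : Sub({0 < ⋯ < N}) ⥤ M` into an additive category is additive if and only
if for every object `(i,j)` the canonical map `F(i,j) ⟶ ⨁_{i ≤ l < j} F(l, l+1)` is an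
isomorphism. -/
theorem isAdditiveOn_iff_canMap_isIso {M : Type*} [Category M] [Preadditive M]
    [HasZeroObject M] [HasFiniteBiproducts M] [HasBinaryBiproducts M] {N : ℕ}
    (F : SubCat N ⥤ M) :
    IsAdditiveOn F ↔ ∀ (i j : Fin (N + 1)) (h : i ≤ j), IsIso (canMap F i j h) := by
  constructor
  · intro hF i j h
    exact canMap_isIso_of_additive F hF ((j : ℕ) - (i : ℕ)) i j h rfl
  · intro hcan
    constructor
    · intro i
      haveI := hcan i i (le_refl i)
      exact (isZero_biproduct_empty F (subIdx_isEmpty N i)).of_iso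
        (asIso (canMap F i i (le_refl i)))
    · intro i j k hij hjk
      haveI := hcan i k (hij.trans hjk)
      haveI := hcan i j hij
      haveI := hcan j k hjk
      haveI hbm : IsIso (biprod.map (canMap F i j hij) (canMap F j k hjk)) := by
        rw [show biprod.map (canMap F i j hij) (canMap F j k hjk) =
          (biprod.mapIso (asIso (canMap F i j hij)) (asIso (canMap F j k hjk))).hom from rfl]
        infer_instance
      have heq : biprod.lift
          (F.map (homOfLE (show (⟨(i, k), hij.trans hjk⟩ : SubCat N) ≤ ⟨(i, j), hij⟩ from
            ⟨le_refl i, hjk⟩)))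
          (F.map (homOfLE (show (⟨(i, k), hij.trans hjk⟩ : SubCat N) ≤ ⟨(j, k), hjk⟩ from
            ⟨hij, le_refl k⟩))) =
          (canMap F i k (hij.trans hjk) ≫ cmpMap F hij hjk) ≫
            inv (biprod.map (canMap F i j hij) (canMap F j k hjk)) := by
        rw [square F hij hjk, Category.assoc, IsIso.hom_inv_id, Category.comp_id]
      rw [heq]
      infer_instance
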